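/- Let 𝓛_e be a real (c+1)×(c+1) matrix whose off-diagonal entries are nonpositive and whose row sums and column sums are all zero. For γ ∈ ℝ^c let γ_e = (γ, 0) ∈ ℝ^{c+1} be γ extended by a zero last component. Then γ_eᵀ 𝓛_e Exp(γ_e) ≥ 0, and equality holds if and only if (a) γ_i = γ_j for all 1 ≤ i, j ≤ c with i ≠ j and (𝓛_e)_{ij} ≠ 0, and (b) γ_i = 0 for every 1 ≤ i ≤ c such that (𝓛_e)_{i,c+1} ≠ 0 or (𝓛_e)_{c+1,i} ≠ 0. -/

import Mathlib

/-!
With `D(x, y) = exp x - exp y - exp y * (x - y)` the Bregman divergence of `exp`, vanishing row and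
column sums of `L` give `gᵀ L Exp(g) = ∑ᵢⱼ (-Lᵢⱼ) D(gᵢ, gⱼ)`. Off the diagonal `-Lᵢⱼ ≥ 0`, on it
`D(gᵢ, gᵢ) = 0`, and `D(x, y) ≥ 0` with equality iff `x = y` by strict convexity of `exp`. So the
form is nonnegative and vanishes iff `g` is constant along every nonzero entry of `L`; for
`g = (γ, 0)` this is conditions (a) and (b).
-/

open Matrix Real

noncomputable def expBregman (x y : ℝ) : ℝ := exp x - exp y - exp y * (x - y)

lemma expBregman_eq_mul (x y : ℝ) :
    expBregman x y = exp y * (exp (x - y) - (x - y + 1)) := by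
  rw [expBregman, exp_sub]
  field_simp
  ring

@[simp]
lemma expBregman_self (x : ℝ) : expBregman x x = 0 := by
  simp [expBregman]

lemma expBregman_nonneg (x y : ℝ) : 0 ≤ expBregman x y := by
  rw [expBregman_eq_mul]
  exact mul_nonneg (exp_pos y).le (sub_nonneg.2 (add_one_le_exp _))

lemma expBregman_eq_zero_iff {x y : ℝ} : expBregman x y = 0 ↔ x = y := by
  refine ⟨fun h => ?_, fun h => h ▸ expBregman_self x⟩
  by_contra hxy
  have hlt : x - y + 1 < exp (x - y) := add_one_lt_exp (sub_ne_zero.2 hxy)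
  rw [expBregman_eq_mul] at h
  exact (mul_pos (exp_pos y) (sub_pos.2 hlt)).ne' h

section BalancedLaplacian

variable {ι : Type*} {L : Matrix ι ι ℝ}

lemma neg_mul_expBregman_nonneg (hoff : ∀ i j, i ≠ j → L i j ≤ 0) (g : ι → ℝ) (i j : ι) :
    0 ≤ -L i j * expBregman (g i) (g j) := by
  rcases eq_or_ne i j with rfl | hij
  · simp
  · exact mul_nonneg (neg_nonneg.2 (hoff i j hij)) (expBregman_nonneg _ _)

lemma neg_mul_expBregman_eq_zero_iff (g : ι → ℝ) (i j : ι) :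
    -L i j * expBregman (g i) (g j) = 0 ↔ (L i j ≠ 0 → g i = g j) := by
  rw [mul_eq_zero, neg_eq_zero, expBregman_eq_zero_iff, or_iff_not_imp_left]

variable [Fintype ι]

lemma dotProduct_mulVec_exp_eq_sum_expBregman (hrow : ∀ i, ∑ j, L i j = 0)
    (hcol : ∀ j, ∑ i, L i j = 0) (g : ι → ℝ) :
    g ⬝ᵥ L *ᵥ (fun i => exp (g i)) = ∑ i, ∑ j, -L i j * expBregman (g i) (g j) := by
  have hrow' : ∀ f : ι → ℝ, ∑ i, ∑ j, L i j * f i = 0 := fun f => by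
    simp [← Finset.sum_mul, hrow]
  have hcol' : ∀ f : ι → ℝ, ∑ i, ∑ j, L i j * f j = 0 := fun f => by
    rw [Finset.sum_comm]; simp [← Finset.sum_mul, hcol]
  calc g ⬝ᵥ L *ᵥ (fun i => exp (g i))
      = ∑ i, ∑ j, (L i j * (g i * exp (g j)) - L i j * exp (g i) + L i j * exp (g j)
          - L i j * (g j * exp (g j))) := by
        simp only [Finset.sum_sub_distrib, Finset.sum_add_distrib, hrow', hcol', sub_zero,
          add_zero, dotProduct, mulVec, Finset.mul_sum, mul_left_comm]
    _ = ∑ i, ∑ j, -L i j * expBregman (g i) (g j) := by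
        refine Finset.sum_congr rfl fun i _ => Finset.sum_congr rfl fun j _ => ?_
        rw [expBregman]; ring

variable (hoff : ∀ i j, i ≠ j → L i j ≤ 0) (hrow : ∀ i, ∑ j, L i j = 0)
  (hcol : ∀ j, ∑ i, L i j = 0)
include hoff hrow hcol

lemma dotProduct_mulVec_exp_nonneg (g : ι → ℝ) : 0 ≤ g ⬝ᵥ L *ᵥ (fun i => exp (g i)) := by
  rw [dotProduct_mulVec_exp_eq_sum_expBregman hrow hcol]
  exact Fintype.sum_nonneg fun i => Fintype.sum_nonneg fun j => neg_mul_expBregman_nonneg hoff g i j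

lemma dotProduct_mulVec_exp_eq_zero_iff (g : ι → ℝ) :
    g ⬝ᵥ L *ᵥ (fun i => exp (g i)) = 0 ↔ ∀ i j, L i j ≠ 0 → g i = g j := by
  rw [dotProduct_mulVec_exp_eq_sum_expBregman hrow hcol, ← Fintype.sum_prod_type',
    Fintype.sum_eq_zero_iff_of_nonneg fun p => neg_mul_expBregman_nonneg hoff g p.1 p.2]
  simp only [funext_iff, Pi.zero_apply, Prod.forall, neg_mul_expBregman_eq_zero_iff]

end BalancedLaplacian

lemma forall_rel_imp_snoc_zero_eq_iff {c : ℕ} (R : Fin (c + 1) → Fin (c + 1) → Prop)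
    (γ : Fin c → ℝ) :
    (∀ i j, R i j → (Fin.snoc γ 0 : Fin (c + 1) → ℝ) i = (Fin.snoc γ 0 : Fin (c + 1) → ℝ) j) ↔
      (∀ i j : Fin c, i ≠ j → R i.castSucc j.castSucc → γ i = γ j) ∧
        ∀ i : Fin c, R i.castSucc (Fin.last c) ∨ R (Fin.last c) i.castSucc → γ i = 0 := by
  simp only [Fin.forall_fin_succ', Fin.snoc_castSucc, Fin.snoc_last, or_imp, forall_and,
    imp_true_iff, and_true, @eq_comm ℝ 0]
  constructor
  · rintro ⟨⟨hcc, hlc⟩, hcl⟩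
    exact ⟨fun i j _ => hcc i j, hcl, hlc⟩
  · rintro ⟨hcc, hcl, hlc⟩
    refine ⟨⟨fun i j h => ?_, hlc⟩, hcl⟩
    rcases eq_or_ne i j with rfl | hij
    · rfl
    · exact hcc i j hij h

/-- (Theorem 3.) For a balanced Laplacian `𝓛_e` of the extended graph of complexes and
`γ_e = (γ, 0)`, one has `γ_eᵀ 𝓛_e Exp(γ_e) ≥ 0`, with equality iff `γ` is constant on every
edge among the first `c` vertices and vanishes on every vertex linked to the zero complex. -/
theorem stmt_9 (c : ℕ) (Le : Matrix (Fin (c + 1)) (Fin (c + 1)) ℝ)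
    (hoff : ∀ i j, i ≠ j → Le i j ≤ 0)
    (hrow : ∀ i, ∑ j, Le i j = 0)
    (hcol : ∀ j, ∑ i, Le i j = 0)
    (γ : Fin c → ℝ) :
    0 ≤ (Fin.snoc γ 0 : Fin (c + 1) → ℝ) ⬝ᵥ
        Le.mulVec (fun i => Real.exp ((Fin.snoc γ 0 : Fin (c + 1) → ℝ) i)) ∧
    ((Fin.snoc γ 0 : Fin (c + 1) → ℝ) ⬝ᵥ
        Le.mulVec (fun i => Real.exp ((Fin.snoc γ 0 : Fin (c + 1) → ℝ) i)) = 0 ↔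
      ((∀ i j : Fin c, i ≠ j → Le i.castSucc j.castSucc ≠ 0 → γ i = γ j) ∧
       (∀ i : Fin c,
          (Le i.castSucc (Fin.last c) ≠ 0 ∨ Le (Fin.last c) i.castSucc ≠ 0) → γ i = 0))) :=
  ⟨dotProduct_mulVec_exp_nonneg hoff hrow hcol _,
    (dotProduct_mulVec_exp_eq_zero_iff hoff hrow hcol _).trans
      (forall_rel_imp_snoc_zero_eq_iff (fun i j => Le i j ≠ 0) γ)⟩
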